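/- arXiv:1912.01578 — 2 statements merged into one kernel-verified Lean document; each statement's English description precedes it below -/
import Mathlib

section
/- Let v ≥ 2, let f be the effects-type coding of a v-level factor and set A = ∑_{i=1}^v f(i)f(i)ᵀ = Id + J and B = ∑_{i≠j} f(i)f(j)ᵀ = −(Id + J). Then the sum over all pairs (i₁,i₂,i₃,i₄), (j₁,j₂,j₃,j₄) with iₖ ≠ jₖ for all four coordinates of (F(i) − F(j))(F(i) − F(j))ᵀ, where F(i) = f(i₁)⊗f(i₂)⊗f(i₃)⊗f(i₄), equals 2(v-1)⁴ A⊗A⊗A⊗A − 2 B⊗B⊗B⊗B = (1/8)v(v-1)⁴(v³−4v²+6v−4) M⊗M⊗M⊗M, with M = (2/(v-1))(Id+J). -/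
/-!
Expanding `(F(i) - F(j))(F(i) - F(j))ᵀ` gives four terms, each a Kronecker product of four
rank-one matrices `f(iₖ)f(jₖ)ᵀ`. Since the constraint `iₖ ≠ jₖ` acts coordinatewise, the sum of
each term over the admissible pairs factors into a Kronecker product of one-factor sums over
`i ≠ j`. These are `(v - 1) A` for `f(i)f(i)ᵀ` and `f(j)f(j)ᵀ`, and `(∑ f)(∑ f)ᵀ - A = -A = B`
for the two cross terms, because the effects coding sums to zero. For the second identity,
`B = -A` and `M = (2/(v-1)) A`, so both sides are multiples of `A ⊗ A ⊗ A ⊗ A`, and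
`2(v-1)⁴ - 2 = 2v(v³ - 4v² + 6v - 4)`.
-/

open Kronecker

/-- Effects-type coding of a `v`-level factor. -/
def eff (v : ℕ) (i : Fin v) : Fin (v - 1) → ℝ :=
  fun j => if (i : ℕ) = v - 1 then -1 else if (i : ℕ) = (j : ℕ) then 1 else 0

/-- All-ones matrix. -/
def Jmat (v : ℕ) : Matrix (Fin (v - 1)) (Fin (v - 1)) ℝ := Matrix.of fun _ _ => 1

/-- `A = Id + J = ∑ᵢ f(i)f(i)ᵀ`. -/
noncomputable def Amat (v : ℕ) : Matrix (Fin (v - 1)) (Fin (v - 1)) ℝ := 1 + Jmat v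

/-- `B = -(Id + J) = ∑_{i≠j} f(i)f(j)ᵀ`. -/
noncomputable def Bmat (v : ℕ) : Matrix (Fin (v - 1)) (Fin (v - 1)) ℝ := -(1 + Jmat v)

/-- One-way layout information matrix `M = (2/(v-1))(Id + J)`. -/
noncomputable def Mmat (v : ℕ) : Matrix (Fin (v - 1)) (Fin (v - 1)) ℝ :=
  (2 / ((v : ℝ) - 1)) • ((1 : Matrix (Fin (v - 1)) (Fin (v - 1)) ℝ) + Jmat v)

/-- `F(i) = f(i₁) ⊗ f(i₂) ⊗ f(i₃) ⊗ f(i₄)` (Kronecker product of vectors). -/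
def Fvec (v : ℕ) (i : Fin v × Fin v × Fin v × Fin v) :
    ((Fin (v - 1) × Fin (v - 1)) × Fin (v - 1)) × Fin (v - 1) → ℝ :=
  fun p => eff v i.1 p.1.1.1 * eff v i.2.1 p.1.1.2 * eff v i.2.2.1 p.1.2 * eff v i.2.2.2 p.2

open Matrix

section OffDiagSum

variable {ι : Type*} [Fintype ι] [DecidableEq ι]

def offDiagSum {M : Type*} [AddCommMonoid M] (g : ι → ι → M) : M :=
  ∑ i, ∑ j, if i ≠ j then g i j else 0

theorem offDiagSum_swap {M : Type*} [AddCommMonoid M] (g : ι → ι → M) :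
    offDiagSum (fun i j => g j i) = offDiagSum g := by
  unfold offDiagSum
  rw [Finset.sum_comm]
  simp only [ne_comm]

theorem offDiagSum_eq_sub_diag {M : Type*} [AddCommGroup M] (g : ι → ι → M) :
    offDiagSum g = ∑ i, ∑ j, g i j - ∑ i, g i i := by
  have hsplit : ∀ i j, (if i ≠ j then g i j else 0) = g i j - if i = j then g i j else 0 := by
    intro i j
    split_ifs <;> simp_all
  simp only [offDiagSum, hsplit, Finset.sum_sub_distrib, Finset.sum_ite_eq, Finset.mem_univ,
    if_true]

theorem offDiagSum_const_right (R : Type*) {M : Type*} [Ring R] [AddCommGroup M] [Module R M]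
    (h : ι → M) : offDiagSum (fun i _ => h i) = ((Fintype.card ι : R) - 1) • ∑ i, h i := by
  simp [offDiagSum_eq_sub_diag, sub_smul, Finset.smul_sum, Nat.cast_smul_eq_nsmul]

theorem offDiagSum_apply {m n R : Type*} [AddCommMonoid R] (g : ι → ι → Matrix m n R)
    (a : m) (b : n) : offDiagSum g a b = offDiagSum fun i j => g i j a b := by
  simp only [offDiagSum, Matrix.sum_apply, Matrix.ite_apply, Matrix.zero_apply]

theorem sum_ite_ne4_mul {R : Type*} [CommSemiring R] (g₁ g₂ g₃ g₄ : ι → ι → R) :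
    ∑ i : ι × ι × ι × ι, ∑ j : ι × ι × ι × ι,
      (if i.1 ≠ j.1 ∧ i.2.1 ≠ j.2.1 ∧ i.2.2.1 ≠ j.2.2.1 ∧ i.2.2.2 ≠ j.2.2.2 then
        g₁ i.1 j.1 * g₂ i.2.1 j.2.1 * g₃ i.2.2.1 j.2.2.1 * g₄ i.2.2.2 j.2.2.2 else 0)
      = offDiagSum g₁ * offDiagSum g₂ * offDiagSum g₃ * offDiagSum g₄ := by
  have hfactor : ∀ i j : ι × ι × ι × ι,
      (if i.1 ≠ j.1 ∧ i.2.1 ≠ j.2.1 ∧ i.2.2.1 ≠ j.2.2.1 ∧ i.2.2.2 ≠ j.2.2.2 then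
        g₁ i.1 j.1 * g₂ i.2.1 j.2.1 * g₃ i.2.2.1 j.2.2.1 * g₄ i.2.2.2 j.2.2.2 else 0)
      = (if i.1 ≠ j.1 then g₁ i.1 j.1 else 0) *
        ((if i.2.1 ≠ j.2.1 then g₂ i.2.1 j.2.1 else 0) *
        ((if i.2.2.1 ≠ j.2.2.1 then g₃ i.2.2.1 j.2.2.1 else 0) *
        (if i.2.2.2 ≠ j.2.2.2 then g₄ i.2.2.2 j.2.2.2 else 0))) := by
    intro i j
    split_ifs <;> simp_all [mul_assoc]
  simp only [hfactor, Fintype.sum_prod_type, ← Finset.mul_sum, ← Finset.sum_mul, offDiagSum]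
  ring

theorem sum_ite_ne4_kronecker {R : Type*} [CommSemiring R]
    {m₁ n₁ m₂ n₂ m₃ n₃ m₄ n₄ : Type*}
    (g₁ : ι → ι → Matrix m₁ n₁ R) (g₂ : ι → ι → Matrix m₂ n₂ R)
    (g₃ : ι → ι → Matrix m₃ n₃ R) (g₄ : ι → ι → Matrix m₄ n₄ R) :
    ∑ i : ι × ι × ι × ι, ∑ j : ι × ι × ι × ι,
      (if i.1 ≠ j.1 ∧ i.2.1 ≠ j.2.1 ∧ i.2.2.1 ≠ j.2.2.1 ∧ i.2.2.2 ≠ j.2.2.2 then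
        g₁ i.1 j.1 ⊗ₖ g₂ i.2.1 j.2.1 ⊗ₖ g₃ i.2.2.1 j.2.2.1 ⊗ₖ g₄ i.2.2.2 j.2.2.2 else 0)
      = offDiagSum g₁ ⊗ₖ offDiagSum g₂ ⊗ₖ offDiagSum g₃ ⊗ₖ offDiagSum g₄ := by
  ext ⟨⟨⟨a₁, a₂⟩, a₃⟩, a₄⟩ ⟨⟨⟨b₁, b₂⟩, b₃⟩, b₄⟩
  simp only [Matrix.sum_apply, Matrix.ite_apply, Matrix.zero_apply, kroneckerMap_apply,
    offDiagSum_apply]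
  exact sum_ite_ne4_mul (fun i j => g₁ i j a₁ b₁) (fun i j => g₂ i j a₂ b₂)
    (fun i j => g₃ i j a₃ b₃) (fun i j => g₄ i j a₄ b₄)

end OffDiagSum

theorem vecMulVec_sub_sub {n R : Type*} [Ring R] (x y : n → R) :
    vecMulVec (x - y) (x - y)
      = vecMulVec x x + vecMulVec y y - vecMulVec x y - vecMulVec y x := by
  rw [sub_vecMulVec, vecMulVec_sub, vecMulVec_sub]
  abel

section EffectsCoding

variable {v : ℕ}

theorem eff_apply (i : Fin v) (a : Fin (v - 1)) :
    eff v i a = (if (i : ℕ) = a then 1 else 0) - if (i : ℕ) = v - 1 then 1 else 0 := by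
  have := a.isLt
  unfold eff
  split_ifs <;> first | omega | norm_num

theorem eff_mul_eff (i : Fin v) (a b : Fin (v - 1)) :
    eff v i a * eff v i b
      = (if (i : ℕ) = a then (if a = b then 1 else 0) else 0)
        + if (i : ℕ) = v - 1 then 1 else 0 := by
  have := a.isLt
  have := b.isLt
  simp only [eff_apply, Fin.ext_iff]
  split_ifs <;> first | omega | norm_num

theorem sum_eff : ∑ i, eff v i = 0 := by
  funext a
  have := a.isLt
  simp only [Finset.sum_apply, eff_apply, Pi.zero_apply, Finset.sum_sub_distrib]
  rw [Fin.sum_univ_eq_sum_range (fun k => if k = (a : ℕ) then (1 : ℝ) else 0),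
    Fin.sum_univ_eq_sum_range (fun k => if k = v - 1 then (1 : ℝ) else 0)]
  simp [Finset.sum_ite_eq', show (a : ℕ) < v by omega, show v - 1 < v by omega]

theorem sum_vecMulVec_eff_self : ∑ i, vecMulVec (eff v i) (eff v i) = Amat v := by
  ext a b
  have := a.isLt
  simp only [Matrix.sum_apply, vecMulVec_apply, eff_mul_eff, Finset.sum_add_distrib]
  rw [Fin.sum_univ_eq_sum_range
      (fun k => if k = (a : ℕ) then (if a = b then (1 : ℝ) else 0) else 0),
    Fin.sum_univ_eq_sum_range (fun k => if k = v - 1 then (1 : ℝ) else 0)]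
  simp [Finset.sum_ite_eq', show (a : ℕ) < v by omega, show v - 1 < v by omega, Amat, Jmat,
    one_apply, add_comm]

theorem offDiagSum_vecMulVec_eff :
    offDiagSum (fun i j => vecMulVec (eff v i) (eff v j)) = Bmat v := by
  have hcross : ∑ i, ∑ j, vecMulVec (eff v i) (eff v j) = 0 := by
    ext a b
    simp only [Matrix.sum_apply, vecMulVec_apply, ← Finset.sum_mul_sum, ← Finset.sum_apply,
      sum_eff, Pi.zero_apply, zero_mul, Matrix.zero_apply]
  rw [offDiagSum_eq_sub_diag, hcross, sum_vecMulVec_eff_self, zero_sub]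
  rfl

theorem vecMulVec_Fvec (i j : Fin v × Fin v × Fin v × Fin v) :
    vecMulVec (Fvec v i) (Fvec v j)
      = vecMulVec (eff v i.1) (eff v j.1) ⊗ₖ vecMulVec (eff v i.2.1) (eff v j.2.1)
        ⊗ₖ vecMulVec (eff v i.2.2.1) (eff v j.2.2.1)
        ⊗ₖ vecMulVec (eff v i.2.2.2) (eff v j.2.2.2) := by
  ext ⟨⟨⟨a₁, a₂⟩, a₃⟩, a₄⟩ ⟨⟨⟨b₁, b₂⟩, b₃⟩, b₄⟩
  simp only [vecMulVec_apply, kroneckerMap_apply, Fvec]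
  ring

end EffectsCoding

theorem stmt_5 (v : ℕ) (hv : 2 ≤ v) :
    (∑ i : Fin v × Fin v × Fin v × Fin v, ∑ j : Fin v × Fin v × Fin v × Fin v,
        if i.1 ≠ j.1 ∧ i.2.1 ≠ j.2.1 ∧ i.2.2.1 ≠ j.2.2.1 ∧ i.2.2.2 ≠ j.2.2.2 then
          Matrix.vecMulVec (Fvec v i - Fvec v j) (Fvec v i - Fvec v j) else 0)
      = (2 * ((v : ℝ) - 1) ^ 4) • (Amat v ⊗ₖ Amat v ⊗ₖ Amat v ⊗ₖ Amat v)
        - (2 : ℝ) • (Bmat v ⊗ₖ Bmat v ⊗ₖ Bmat v ⊗ₖ Bmat v) ∧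
    (2 * ((v : ℝ) - 1) ^ 4) • (Amat v ⊗ₖ Amat v ⊗ₖ Amat v ⊗ₖ Amat v)
        - (2 : ℝ) • (Bmat v ⊗ₖ Bmat v ⊗ₖ Bmat v ⊗ₖ Bmat v)
      = ((1 / 8) * (v : ℝ) * ((v : ℝ) - 1) ^ 4
            * ((v : ℝ) ^ 3 - 4 * (v : ℝ) ^ 2 + 6 * (v : ℝ) - 4)) •
          (Mmat v ⊗ₖ Mmat v ⊗ₖ Mmat v ⊗ₖ Mmat v) := by
  constructor
  · -- passing through filtered sums lets the four terms of the summand be summed separately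
    simp only [vecMulVec_sub_sub, ← Finset.sum_filter, Finset.sum_add_distrib,
      Finset.sum_sub_distrib]
    simp only [Finset.sum_filter, vecMulVec_Fvec]
    set E : Fin v → Fin v → Matrix (Fin (v - 1)) (Fin (v - 1)) ℝ :=
      fun i j => vecMulVec (eff v i) (eff v j) with hE
    have hdiag : offDiagSum (fun i _ => E i i) = ((v : ℝ) - 1) • Amat v := by
      rw [offDiagSum_const_right ℝ, Fintype.card_fin, hE, sum_vecMulVec_eff_self]
    have hcross : offDiagSum E = Bmat v := offDiagSum_vecMulVec_eff
    have pow4 := fun g : Fin v → Fin v → Matrix (Fin (v - 1)) (Fin (v - 1)) ℝ =>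
      sum_ite_ne4_kronecker g g g g
    rw [pow4 (fun i _ => E i i), pow4 (fun _ j => E j j), pow4 E, pow4 (fun i j => E j i),
      offDiagSum_swap (fun i _ => E i i), offDiagSum_swap E, hdiag, hcross]
    simp only [smul_kronecker, kronecker_smul, smul_smul]
    module
  · have hv1 : (v : ℝ) - 1 ≠ 0 := by
      have : (2 : ℝ) ≤ v := by exact_mod_cast hv
      linarith
    have hB : Bmat v = (-1 : ℝ) • Amat v := by rw [neg_one_smul]; rfl
    have hM : Mmat v = (2 / ((v : ℝ) - 1)) • Amat v := rfl
    rw [hB, hM]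
    simp only [smul_kronecker, kronecker_smul, smul_smul, ← sub_smul]
    congr 1
    field_simp
    ring
end

section
/- Let p(d) be a real polynomial of degree 4 with negative leading coefficient and let c be a real number with p(d) ≤ c for all integers d in {0, 1, …, S}. Then the set of integers d ∈ {1,…,S-1} with p(d) = c has cardinality at most 4, and moreover it is contained in a union of two pairs of adjacent integers {d*, d*+1} ∪ {d₁*, d₁*+1}. -/
/-!
If `q = c - p` vanished at three integers `a < z < b` with `z` at distance at least two from both
`a` and `b`, then `q = (x - a)(x - z)(x - b) ℓ(x)` with `ℓ` affine. The cubic factor changes sign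
at `a` and at `z`, so `q ≥ 0` at `a ± 1` and `z ± 1` forces `ℓ` to cross zero upwards near `a` and
downwards near `z`, which only the zero function does. Hence every interior zero lies within one
of the smallest or of the largest zero.
-/

open Polynomial

theorem exists_eval_eq_mul_affine_of_natDegree_le_four {R : Type*} [CommRing R] [IsDomain R]
    {q : R[X]} (hq : q.natDegree ≤ 4) {a z b : R} (haz : a ≠ z) (hab : a ≠ b) (hzb : z ≠ b)
    (ha : q.IsRoot a) (hz : q.IsRoot z) (hb : q.IsRoot b) :
    ∃ α β : R, ∀ x, q.eval x = (x - a) * (x - z) * (x - b) * (α * x + β) := by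
  rcases eq_or_ne q 0 with rfl | hq0
  · exact ⟨0, 0, fun x => by simp⟩
  have hle : ({a, z, b} : Multiset R) ≤ q.roots := by
    refine (Multiset.le_iff_subset (by simp [haz, hab, hzb])).mpr ?_
    simpa [Multiset.subset_iff, hq0] using ⟨ha, hz, hb⟩
  obtain ⟨s, rfl⟩ := (Multiset.prod_X_sub_C_dvd_iff_le_roots hq0 _).mpr hle
  have hs0 : s ≠ 0 := right_ne_zero_of_mul hq0
  have hs : s.natDegree ≤ 1 := by
    rw [natDegree_mul (by simp [X_sub_C_ne_zero]) hs0,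
      natDegree_multiset_prod_X_sub_C_eq_card] at hq
    simp only [Multiset.insert_eq_cons, Multiset.card_cons, Multiset.card_singleton] at hq
    omega
  obtain ⟨α, β, rfl⟩ := exists_eq_X_add_C_of_natDegree_le_one hs
  refine ⟨α, β, fun x => ?_⟩
  simp only [Multiset.insert_eq_cons, Multiset.map_cons, Multiset.map_singleton,
    Multiset.prod_cons, Multiset.prod_singleton, eval_mul, eval_add, eval_sub, eval_X, eval_C]
  ring

theorem affine_eq_zero_of_crosses_up_and_down {K : Type*} [Field K] [LinearOrder K]
    [IsStrictOrderedRing K] {α β x₀ x₁ y₀ y₁ : K} (hx : x₀ < x₁) (hy : y₀ < y₁)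
    (hx₀ : α * x₀ + β ≤ 0) (hx₁ : 0 ≤ α * x₁ + β) (hy₀ : 0 ≤ α * y₀ + β) (hy₁ : α * y₁ + β ≤ 0) :
    α = 0 ∧ β = 0 := by
  have hα : α = 0 := le_antisymm (by nlinarith) (by nlinarith)
  subst hα
  constructor <;> linarith

theorem eq_zero_of_nonneg_around_two_of_three_roots {q : ℝ[X]} (hq : q.natDegree ≤ 4)
    {a z b : ℝ} (haz : a + 1 < z) (hzb : z + 1 < b)
    (ha : q.IsRoot a) (hz : q.IsRoot z) (hb : q.IsRoot b)
    (ha₀ : 0 ≤ q.eval (a - 1)) (ha₁ : 0 ≤ q.eval (a + 1))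
    (hz₀ : 0 ≤ q.eval (z - 1)) (hz₁ : 0 ≤ q.eval (z + 1)) : q = 0 := by
  obtain ⟨α, β, hqe⟩ := exists_eval_eq_mul_affine_of_natDegree_le_four hq (by linarith)
    (by linarith) (by linarith) ha hz hb
  rw [hqe] at ha₀ ha₁ hz₀ hz₁
  have ⟨hα, hβ⟩ := affine_eq_zero_of_crosses_up_and_down (x₀ := a - 1) (x₁ := a + 1)
    (y₀ := z - 1) (y₁ := z + 1) (by linarith) (by linarith)
    (nonpos_of_mul_nonneg_right ha₀ (by nlinarith))
    (nonneg_of_mul_nonneg_right ha₁ (by nlinarith))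
    (nonneg_of_mul_nonneg_right hz₀ (by nlinarith))
    (nonpos_of_mul_nonneg_right hz₁ (by nlinarith))
  exact Polynomial.funext fun x => by simp [hqe, hα, hβ]

theorem exists_subset_two_pairs {Z : Set ℤ} (hZ : Z.Finite)
    (h : ∀ a ∈ Z, ∀ z ∈ Z, ∀ b ∈ Z, a + 2 ≤ z → z + 2 ≤ b → False) :
    ∃ d₀ d₁ : ℤ, Z ⊆ {d₀, d₀ + 1, d₁, d₁ + 1} := by
  rcases Z.eq_empty_or_nonempty with rfl | hne
  · exact ⟨0, 0, Set.empty_subset _⟩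
  obtain ⟨A, hA, hmin⟩ := Z.exists_min_image (fun x => x) hZ hne
  obtain ⟨B, hB, hmax⟩ := Z.exists_max_image (fun x => x) hZ hne
  refine ⟨A, B - 1, fun z hz => ?_⟩
  have hAz := hmin z hz
  have hzB := hmax z hz
  simp only [Set.mem_insert_iff, Set.mem_singleton_iff]
  by_contra hfar
  exact h A hA z hz B hB (by omega) (by omega)

theorem ncard_le_four_of_subset {α : Type*} {Z : Set α} {a b c d : α} (h : Z ⊆ {a, b, c, d}) :
    Z.ncard ≤ 4 := by
  classical
  have hcoe : ({a, b, c, d} : Set α) = ↑({a, b, c, d} : Finset α) := by simp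
  calc Z.ncard ≤ ({a, b, c, d} : Set α).ncard := Set.ncard_le_ncard h (Set.toFinite _)
    _ = ({a, b, c, d} : Finset α).card := by rw [hcoe, Set.ncard_coe_finset]
    _ ≤ 4 := Finset.card_le_four

theorem stmt_16_general (p : Polynomial ℝ) (hdeg : p.degree = 4)
    (c : ℝ) (S : ℤ) (hb : ∀ d : ℤ, 0 ≤ d → d ≤ S → p.eval (d : ℝ) ≤ c) :
    ∃ d₀ d₁ : ℤ,
      {d : ℤ | 1 ≤ d ∧ d ≤ S - 1 ∧ p.eval (d : ℝ) = c} ⊆ {d₀, d₀ + 1, d₁, d₁ + 1} ∧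
      {d : ℤ | 1 ≤ d ∧ d ≤ S - 1 ∧ p.eval (d : ℝ) = c}.ncard ≤ 4 := by
  set q : ℝ[X] := C c - p
  have hq : q.natDegree ≤ 4 :=
    (natDegree_sub_le _ _).trans (by simp [natDegree_eq_of_degree_eq_some hdeg])
  have hq0 : q ≠ 0 := fun h => by
    have hC : (C c).degree ≤ 0 := degree_C_le
    rw [sub_eq_zero.mp h, hdeg] at hC
    exact absurd hC (by decide)
  have hnonneg : ∀ d : ℤ, 0 ≤ d → d ≤ S → 0 ≤ q.eval (d : ℝ) := fun d h₀ hS => by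
    simpa [q] using hb d h₀ hS
  have hfin : {d : ℤ | 1 ≤ d ∧ d ≤ S - 1 ∧ p.eval (d : ℝ) = c}.Finite :=
    (Set.finite_Icc 1 (S - 1)).subset fun d hd => ⟨hd.1, hd.2.1⟩
  obtain ⟨d₀, d₁, hsub⟩ := exists_subset_two_pairs hfin
    fun a ⟨ha₁, _, ha⟩ z ⟨_, hzS, hz⟩ b ⟨_, _, hbc⟩ haz hzb =>
      hq0 <| eq_zero_of_nonneg_around_two_of_three_roots hq (a := a) (z := z) (b := b)
        (by exact_mod_cast (by omega : a + 1 < z)) (by exact_mod_cast (by omega : z + 1 < b))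
        (by simp [q, ha]) (by simp [q, hz]) (by simp [q, hbc])
        (by simpa using hnonneg (a - 1) (by omega) (by omega))
        (by simpa using hnonneg (a + 1) (by omega) (by omega))
        (by simpa using hnonneg (z - 1) (by omega) (by omega))
        (by simpa using hnonneg (z + 1) (by omega) (by omega))
  exact ⟨d₀, d₁, hsub, ncard_le_four_of_subset hsub⟩

theorem stmt_16 (p : Polynomial ℝ) (hdeg : p.degree = 4) (hlead : p.leadingCoeff < 0)
    (c : ℝ) (S : ℤ) (hb : ∀ d : ℤ, 0 ≤ d → d ≤ S → p.eval (d : ℝ) ≤ c) :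
    ∃ d₀ d₁ : ℤ,
      {d : ℤ | 1 ≤ d ∧ d ≤ S - 1 ∧ p.eval (d : ℝ) = c} ⊆ {d₀, d₀ + 1, d₁, d₁ + 1} ∧
      {d : ℤ | 1 ≤ d ∧ d ≤ S - 1 ∧ p.eval (d : ℝ) = c}.ncard ≤ 4 :=
  stmt_16_general p hdeg c S hb
end
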